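/- Let T > 0 and C > 0. Let X_k, Z : [0,∞) → ℝ^ℓ and suppose there are right-continuous functions with left limits V_k, V : [0,∞) → ℝ^ℓ such that |V_k(u)| ≤ C and |V(u)| ≤ C for all u and all k, X_k(t) = X_k(0) + ∫₀ᵗ V_k(u) du and Z(t) = Z(0) + ∫₀ᵗ V(u) du for all t ≥ 0. If X_k(0) → Z(0) and V_k → V in the Skorohod sense in D[0,R] for every 0 < R < T, then X_k converges to Z uniformly on [0,T]. -/

import Mathlib

/-!
Since `X_k(t) - Z(t) = X_k(0) - Z(0) + ∫₀ᵗ (V_k - V)`, it suffices that `∫₀ᵀ |V_k - V| → 0`.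
The strip `[R, T]` contributes at most `2C(T - R)`. On `[0, R]` take the time changes `λ_k` of the
Skorohod convergence and split `V_k - V = (V_k - V ∘ λ_k) + (V ∘ λ_k - V)`. The first term is
uniformly small. Since `λ_k(0) = 0`, the logarithmic bound on `λ_k` makes `λ_k → id` uniformly,
and `V`, having left and right limits, has only countably many discontinuities and is therefore
continuous almost everywhere; dominated convergence then makes `∫₀ᴿ |V ∘ λ_k - V|` small.
-/

open Filter

noncomputable section

/-- A time change of `[0,T]`: a strictly increasing continuous bijection of `[0,T]`
onto itself. -/
def IsTimeChange (T : ℝ) (l : ℝ → ℝ) : Prop :=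
  StrictMonoOn l (Set.Icc 0 T) ∧ ContinuousOn l (Set.Icc 0 T) ∧
    l '' Set.Icc 0 T = Set.Icc 0 T

/-- `SkorohodTendsto T Fk F` says that `dist₀^T (Fk k, F) → 0` as `k → ∞`, where
`dist₀^T (f,g)` is the infimum of `ε > 0` such that some time change `λ` of `[0,T]`
satisfies `‖λ‖_T ≤ ε` (with `‖λ‖_T = sup_{0 ≤ s < t ≤ T} |log((λ t - λ s)/(t - s))|`)
and `sup_{0 ≤ t ≤ T} |f t - g (λ t)| ≤ ε`. -/
def SkorohodTendsto {m : ℕ} (T : ℝ) (Fk : ℕ → ℝ → EuclideanSpace ℝ (Fin m))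
    (F : ℝ → EuclideanSpace ℝ (Fin m)) : Prop :=
  ∀ ε > (0 : ℝ), ∃ K : ℕ, ∀ k ≥ K, ∃ l : ℝ → ℝ, IsTimeChange T l ∧
    (∀ s t : ℝ, 0 ≤ s → s < t → t ≤ T → |Real.log ((l t - l s) / (t - s))| ≤ ε) ∧
    ∀ t ∈ Set.Icc (0 : ℝ) T, ‖Fk k t - F (l t)‖ ≤ ε

/-- `F` is right-continuous with left limits on `[0,T']`. -/
def RCLLOn {m : ℕ} (F : ℝ → EuclideanSpace ℝ (Fin m)) (T' : ℝ) : Prop :=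
  (∀ t ∈ Set.Ico (0 : ℝ) T', ContinuousWithinAt F (Set.Ici t) t) ∧
  (∀ t ∈ Set.Ioc (0 : ℝ) T', ∃ L, Tendsto F (nhdsWithin t (Set.Iio t)) (nhds L))

end

open Set Topology Function MeasureTheory Real

section LeftLim

variable {α β : Type*} [LinearOrder α] [TopologicalSpace α] [OrderTopology α]

theorem tendsto_leftLim_nhdsGT_of_tendsto [TopologicalSpace β] [T3Space β] {f : α → β}
    {a : α} {b : β} (h : Tendsto f (𝓝[>] a) (𝓝 b)) : Tendsto (leftLim f) (𝓝[>] a) (𝓝 b) := by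
  rcases eq_or_neBot (𝓝[>] a) with h' | h'
  · simp [h']
  obtain ⟨c, hc⟩ : (Ioi a).Nonempty := nonempty_of_mem (self_mem_nhdsWithin (a := a))
  refine (closed_nhds_basis b).tendsto_right_iff.2 fun s ⟨s_mem, s_closed⟩ => ?_
  obtain ⟨u, au, hu⟩ : ∃ u, a < u ∧ Ioo a u ⊆ {x | f x ∈ s} := by
    have := (closed_nhds_basis b).tendsto_right_iff.1 h s ⟨s_mem, s_closed⟩
    simpa using (mem_nhdsGT_iff_exists_Ioo_subset' hc).1 this
  filter_upwards [Ioo_mem_nhdsGT au] with d hd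
  -- `leftLim f d` is either a limit of values `f y`, `y ∈ (a, d)`, or the junk value `f d`.
  rcases eq_or_neBot (𝓝[<] d) with h'd | h'd
  · simpa [h'd, leftLim_eq_of_eq_bot] using hu hd
  by_cases! h''d : ¬ ∃ y, Tendsto f (𝓝[<] d) (𝓝 y)
  · simpa [leftLim_eq_of_not_tendsto _ h''d] using hu hd
  apply s_closed.mem_of_tendsto (tendsto_leftLim_of_tendsto h''d)
  filter_upwards [Ioo_mem_nhdsLT hd.1] with y hy using hu ⟨hy.1, hy.2.trans hd.2⟩

variable [SecondCountableTopology α] [MetricSpace β] {f : α → β}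

theorem countable_lt_dist_leftLim (hrc : ∀ t, ContinuousWithinAt f (Ici t) t) {r : ℝ}
    (hr : 0 < r) :
    {t | r < dist (f t) (leftLim f t)}.Countable := by
  set J := {t | r < dist (f t) (leftLim f t)}
  refine (countable_setOfPred_isolated_right_within (s := J)).mono fun t ht => ?_
  refine ⟨ht, ?_⟩
  have hjump : Tendsto (fun v => dist (f v) (leftLim f v)) (𝓝[>] t) (𝓝 (dist (f t) (f t))) :=
    ((hrc t).tendsto.mono_left (nhdsWithin_mono _ Ioi_subset_Ici_self)).dist
      (tendsto_leftLim_nhdsGT_of_tendsto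
        ((hrc t).tendsto.mono_left (nhdsWithin_mono _ Ioi_subset_Ici_self)))
  rw [dist_self] at hjump
  have hout : ∀ᶠ v in 𝓝[J ∩ Ioi t] t, v ∉ J :=
    ((hjump.eventually (gt_mem_nhds hr)).filter_mono
      (nhdsWithin_mono _ inter_subset_right)).mono fun v hv hvJ => (lt_asymm hv hvJ).elim
  have hin : ∀ᶠ v in 𝓝[J ∩ Ioi t] t, v ∈ J :=
    mem_of_superset self_mem_nhdsWithin inter_subset_left
  simpa using hout.and hin

theorem countable_not_continuousAt_of_continuousWithinAt_Ici
    (hrc : ∀ t, ContinuousWithinAt f (Ici t) t)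
    (hll : ∀ t, ∃ L, Tendsto f (𝓝[<] t) (𝓝 L)) :
    {t | ¬ContinuousAt f t}.Countable := by
  refine (countable_iUnion fun n : ℕ =>
    countable_lt_dist_leftLim hrc (r := 1 / (n + 1)) Nat.one_div_pos_of_nat).mono fun t ht => ?_
  obtain ⟨n, hn⟩ : ∃ n : ℕ, 1 / ((n : ℝ) + 1) < dist (f t) (leftLim f t) := by
    refine exists_nat_one_div_lt (dist_pos.2 fun heq => ht ?_)
    refine continuousAt_iff_continuous_left_right.2 ⟨?_, hrc t⟩
    rw [← continuousWithinAt_Iio_iff_Iic, ContinuousWithinAt, heq]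
    exact tendsto_leftLim_of_tendsto (hll t)
  exact mem_iUnion.2 ⟨n, hn⟩

end LeftLim

theorem countable_not_continuousAt_comp_max_zero {E : Type*} [MetricSpace E] {f : ℝ → E}
    (hrc : ∀ t, 0 ≤ t → ContinuousWithinAt f (Ici t) t)
    (hll : ∀ t, 0 < t → ∃ L, Tendsto f (𝓝[<] t) (𝓝 L)) :
    {t | ¬ContinuousAt (fun u => f (max u 0)) t}.Countable := by
  refine countable_not_continuousAt_of_continuousWithinAt_Ici (fun t => ?_) (fun t => ?_)
  · rcases le_or_gt 0 t with ht | ht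
    · exact (hrc t ht).congr (fun u hu => by simp [max_eq_left (ht.trans hu)]) (by simp [ht])
    · refine ((continuousAt_const : ContinuousAt (fun _ => f 0) t).congr ?_).continuousWithinAt
      filter_upwards [Iio_mem_nhds ht] with u hu
      simp [(mem_Iio.1 hu).le]
  · rcases le_or_gt t 0 with ht | ht
    · refine ⟨f 0, tendsto_const_nhds.congr' ?_⟩
      filter_upwards [self_mem_nhdsWithin] with u hu
      simp [(hu.trans_le ht).le]
    · obtain ⟨L, hL⟩ := hll t ht
      refine ⟨L, hL.congr' ?_⟩
      filter_upwards [nhdsWithin_le_nhds (Ioi_mem_nhds ht)] with u hu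
      simp [(mem_Ioi.1 hu).le]

theorem abs_exp_sub_one_le (x : ℝ) : |exp x - 1| ≤ exp |x| - 1 := by
  refine abs_le.2 ⟨?_, by linarith [exp_le_exp.2 (le_abs_self x)]⟩
  linarith [add_one_le_exp x, add_one_le_exp |x|, neg_abs_le x]

namespace IsTimeChange

variable {T : ℝ} {l : ℝ → ℝ}

theorem mapsTo (h : IsTimeChange T l) : MapsTo l (Icc 0 T) (Icc 0 T) :=
  fun _ hx => h.2.2 ▸ mem_image_of_mem l hx

theorem map_zero (h : IsTimeChange T l) (hT : 0 ≤ T) : l 0 = 0 := by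
  have h0 : (0 : ℝ) ∈ Icc 0 T := ⟨le_rfl, hT⟩
  obtain ⟨x, hx, hlx⟩ : (0 : ℝ) ∈ l '' Icc 0 T := h.2.2.symm ▸ h0
  exact le_antisymm (hlx ▸ h.1.monotoneOn h0 hx hx.1) (h.mapsTo h0).1

theorem abs_sub_le (h : IsTimeChange T l) {ε : ℝ}
    (hlog : ∀ s t : ℝ, 0 ≤ s → s < t → t ≤ T → |log ((l t - l s) / (t - s))| ≤ ε)
    {t : ℝ} (ht : t ∈ Icc 0 T) : |l t - t| ≤ (exp ε - 1) * t := by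
  have hl0 := h.map_zero (ht.1.trans ht.2)
  rcases ht.1.eq_or_lt with rfl | ht0
  · simp [hl0]
  have hpos : 0 < l t / t :=
    div_pos (hl0 ▸ h.1 ⟨le_rfl, ht0.le.trans ht.2⟩ ht ht0) ht0
  have hε : |log (l t / t)| ≤ ε := by simpa [hl0] using hlog 0 t le_rfl ht0 ht.2
  calc |l t - t| = |l t / t - 1| * t := by
        rw [div_sub_one ht0.ne', abs_div, abs_of_pos ht0, div_mul_cancel₀ _ ht0.ne']
    _ ≤ (exp |log (l t / t)| - 1) * t := by
        gcongr
        simpa [exp_log hpos] using abs_exp_sub_one_le (log (l t / t))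
    _ ≤ (exp ε - 1) * t := by gcongr

end IsTimeChange

section DominatedConvergence

variable {α E : Type*} [MeasurableSpace α] [NormedAddCommGroup E] {μ : Measure α}
  [IsFiniteMeasure μ] {f : α → E} {C : ℝ}

theorem tendsto_integral_norm_comp_sub [TopologicalSpace α] (hf : StronglyMeasurable f)
    (hb : ∀ x, ‖f x‖ ≤ C) (hc : ∀ᵐ x ∂μ, ContinuousAt f x) {φ : ℕ → α → α}
    (hφ : ∀ n, Measurable (φ n)) (hlim : ∀ᵐ x ∂μ, Tendsto (fun n => φ n x) atTop (𝓝 x)) :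
    Tendsto (fun n => ∫ x, ‖f (φ n x) - f x‖ ∂μ) atTop (𝓝 0) := by
  have hbound : ∀ n, ∀ᵐ x ∂μ, ‖‖f (φ n x) - f x‖‖ ≤ 2 * C := fun n =>
    Eventually.of_forall fun x => by
      rw [norm_norm]
      linarith [norm_sub_le (f (φ n x)) (f x), hb (φ n x), hb x]
  have hlim' : ∀ᵐ x ∂μ, Tendsto (fun n => ‖f (φ n x) - f x‖) atTop (𝓝 0) := by
    filter_upwards [hc, hlim] with x hx hxlim
    simpa using ((hx.tendsto.comp hxlim).sub_const (f x)).norm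
  simpa only [integral_zero] using tendsto_integral_of_dominated_convergence
    (F := fun n x => ‖f (φ n x) - f x‖) (fun _ => 2 * C)
    (fun n => ((hf.comp_measurable (hφ n)).sub hf).norm.aestronglyMeasurable)
    (integrable_const _) hbound hlim'

theorem exists_pos_forall_integral_norm_comp_sub_le [PseudoMetricSpace α]
    (hf : StronglyMeasurable f) (hb : ∀ x, ‖f x‖ ≤ C) (hc : ∀ᵐ x ∂μ, ContinuousAt f x)
    {η : ℝ} (hη : 0 < η) :
    ∃ δ > 0, ∀ φ : α → α, Measurable φ → (∀ᵐ x ∂μ, dist (φ x) x ≤ δ) →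
      ∫ x, ‖f (φ x) - f x‖ ∂μ ≤ η := by
  by_contra! hcon
  choose φ hφm hφδ hφη using fun n : ℕ => hcon (1 / (n + 1)) Nat.one_div_pos_of_nat
  have hlim : ∀ᵐ x ∂μ, Tendsto (fun n => φ n x) atTop (𝓝 x) := by
    filter_upwards [ae_all_iff.2 hφδ] with x hx
    exact tendsto_iff_dist_tendsto_zero.2
      (squeeze_zero (fun n => dist_nonneg) hx tendsto_one_div_add_atTop_nhds_zero_nat)
  exact hη.not_ge (ge_of_tendsto' (tendsto_integral_norm_comp_sub hf hb hc hφm hlim)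
    fun n => (hφη n).le)

end DominatedConvergence

theorem tendsto_intervalIntegral_of_forall_lt {g : ℕ → ℝ → ℝ} {a b M : ℝ} (hab : a < b)
    (hg : ∀ k, IntervalIntegrable (g k) volume a b) (hg0 : ∀ k u, 0 ≤ g k u)
    (hgM : ∀ k u, g k u ≤ M)
    (hlim : ∀ c ∈ Ioo a b, Tendsto (fun k => ∫ u in a..c, g k u) atTop (𝓝 0)) :
    Tendsto (fun k => ∫ u in a..b, g k u) atTop (𝓝 0) := by
  refine tendsto_order.2 ⟨fun e he => Eventually.of_forall fun k =>
    he.trans_le (intervalIntegral.integral_nonneg hab.le fun u _ => hg0 k u), fun η hη => ?_⟩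
  obtain ⟨c, hc, hcM⟩ : ∃ c ∈ Ioo a b, M * (b - c) < η / 2 := by
    have : Tendsto (fun c => M * (b - c)) (𝓝[<] b) (𝓝 0) :=
      (Continuous.tendsto' (by fun_prop) b 0 (by simp)).mono_left nhdsWithin_le_nhds
    exact (Eventually.and (Ioo_mem_nhdsLT hab)
      (this.eventually (gt_mem_nhds (half_pos hη)))).exists
  filter_upwards [(hlim c hc).eventually (gt_mem_nhds (half_pos hη))] with k hk
  have hc' : c ∈ uIcc a b := mem_uIcc_of_le hc.1.le hc.2.le
  have hac := (hg k).mono_set (uIcc_subset_uIcc left_mem_uIcc hc')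
  have hcb := (hg k).mono_set (uIcc_subset_uIcc hc' right_mem_uIcc)
  calc ∫ u in a..b, g k u = (∫ u in a..c, g k u) + ∫ u in c..b, g k u :=
        (intervalIntegral.integral_add_adjacent_intervals hac hcb).symm
    _ ≤ (∫ u in a..c, g k u) + M * (b - c) := by
        gcongr
        simpa [mul_comm] using intervalIntegral.integral_mono_on hc.2.le hcb
          intervalIntegrable_const fun u _ => hgM k u
    _ < η := by linarith

theorem dist_add_intervalIntegral_le {E : Type*} [NormedAddCommGroup E] [NormedSpace ℝ E]
    {v w : ℝ → E} {a b t : ℝ} (ht : t ∈ Icc a b) (hv : IntervalIntegrable v volume a b)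
    (hw : IntervalIntegrable w volume a b) (x z : E) :
    dist (x + ∫ u in a..t, v u) (z + ∫ u in a..t, w u) ≤
      dist x z + ∫ u in a..b, ‖v u - w u‖ := by
  have hsub : uIcc a t ⊆ uIcc a b := uIcc_subset_uIcc left_mem_uIcc (mem_uIcc_of_le ht.1 ht.2)
  calc _ ≤ dist x z + dist (∫ u in a..t, v u) (∫ u in a..t, w u) := dist_add_add_le _ _ _ _
    _ ≤ dist x z + ∫ u in a..t, ‖v u - w u‖ := by
        gcongr
        rw [dist_eq_norm, ← intervalIntegral.integral_sub (hv.mono_set hsub) (hw.mono_set hsub)]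
        exact intervalIntegral.norm_integral_le_integral_norm ht.1
    _ ≤ dist x z + ∫ u in a..b, ‖v u - w u‖ := by
        gcongr
        exact intervalIntegral.integral_mono_interval le_rfl ht.1 ht.2
          (Eventually.of_forall fun _ => norm_nonneg _) (hv.sub hw).norm

theorem intervalIntegrable_of_norm_le {E : Type*} [NormedAddCommGroup E] {G : ℝ → E} {C : ℝ}
    (hG : StronglyMeasurable G) (hb : ∀ u, ‖G u‖ ≤ C) (a b : ℝ) :
    IntervalIntegrable G volume a b :=
  ⟨Measure.integrableOn_of_bounded measure_Ioc_lt_top.ne hG.aestronglyMeasurable (ae_of_all _ hb),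
    Measure.integrableOn_of_bounded measure_Ioc_lt_top.ne hG.aestronglyMeasurable (ae_of_all _ hb)⟩

namespace SkorohodTendsto

variable {m : ℕ} {R : ℝ} {Fk : ℕ → ℝ → EuclideanSpace ℝ (Fin m)}
  {F : ℝ → EuclideanSpace ℝ (Fin m)}

theorem congr (h : SkorohodTendsto R Fk F) {Gk : ℕ → ℝ → EuclideanSpace ℝ (Fin m)}
    {G : ℝ → EuclideanSpace ℝ (Fin m)} (hk : ∀ k, EqOn (Gk k) (Fk k) (Icc 0 R))
    (hG : EqOn G F (Icc 0 R)) : SkorohodTendsto R Gk G := by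
  intro ε hε
  obtain ⟨K, hK⟩ := h ε hε
  refine ⟨K, fun k hkK => ?_⟩
  obtain ⟨l, hl, hlog, hclose⟩ := hK k hkK
  refine ⟨l, hl, hlog, fun t ht => ?_⟩
  rw [hk k ht, hG (hl.mapsTo ht)]
  exact hclose t ht

theorem tendsto_integral_norm_sub (h : SkorohodTendsto R Fk F) (hR : 0 ≤ R) {C : ℝ}
    (hFk : ∀ k, StronglyMeasurable (Fk k)) (hF : StronglyMeasurable F) (hb : ∀ u, ‖F u‖ ≤ C)
    (hc : ∀ᵐ u ∂volume.restrict (Ioc 0 R), ContinuousAt F u) :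
    Tendsto (fun k => ∫ u in Ioc 0 R, ‖Fk k u - F u‖) atTop (𝓝 0) := by
  refine tendsto_order.2 ⟨fun a ha => Eventually.of_forall fun k =>
    ha.trans_le (integral_nonneg fun _ => norm_nonneg _), fun η hη => ?_⟩
  obtain ⟨δ, hδ, hφ_close⟩ := exists_pos_forall_integral_norm_comp_sub_le hF hb hc (half_pos hη)
  obtain ⟨ε, hε, hεR, hεδ⟩ : ∃ ε > 0, ε * R < η / 2 ∧ (exp ε - 1) * R < δ := by
    have h1 : Tendsto (fun e => e * R) (𝓝[>] 0) (𝓝 0) :=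
      (Continuous.tendsto' (by fun_prop) 0 0 (by simp)).mono_left nhdsWithin_le_nhds
    have h2 : Tendsto (fun e => (exp e - 1) * R) (𝓝[>] 0) (𝓝 0) :=
      (Continuous.tendsto' (by fun_prop) 0 0 (by simp)).mono_left nhdsWithin_le_nhds
    exact (eventually_mem_nhdsWithin.and ((h1.eventually (gt_mem_nhds (half_pos hη))).and
      (h2.eventually (gt_mem_nhds hδ)))).exists
  obtain ⟨K, hK⟩ := h ε hε
  filter_upwards [eventually_ge_atTop K] with k hkK
  obtain ⟨l, hl, hlog, hclose⟩ := hK k hkK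
  set φ : ℝ → ℝ := fun u => l (max 0 (min u R))
  have hφl : EqOn φ l (Icc 0 R) := fun u hu => by simp [φ, hu.1, hu.2]
  have hφm : Measurable φ := (hl.2.1.comp_continuous (by fun_prop)
    fun u => ⟨le_max_left _ _, max_le hR (min_le_right _ _)⟩).measurable
  have hφδ : ∀ᵐ u ∂volume.restrict (Ioc 0 R), dist (φ u) u ≤ δ := by
    filter_upwards [ae_restrict_mem measurableSet_Ioc] with u hu
    have hu' : u ∈ Icc 0 R := Ioc_subset_Icc_self hu
    rw [hφl hu', Real.dist_eq]
    calc |l u - u| ≤ (exp ε - 1) * u := hl.abs_sub_le hlog hu'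
      _ ≤ (exp ε - 1) * R := by
          gcongr
          · linarith [add_one_le_exp ε]
          · exact hu'.2
      _ ≤ δ := hεδ.le
  have hnear : ∀ u ∈ Ioc 0 R, ‖‖Fk k u - F (φ u)‖‖ ≤ ε := fun u hu => by
    rw [norm_norm, hφl (Ioc_subset_Icc_self hu)]
    exact hclose u (Ioc_subset_Icc_self hu)
  have hint₁ : Integrable (fun u => ‖Fk k u - F (φ u)‖) (volume.restrict (Ioc 0 R)) :=
    .of_bound ((hFk k).sub (hF.comp_measurable hφm)).norm.aestronglyMeasurable ε
      ((ae_restrict_mem measurableSet_Ioc).mono hnear)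
  have hint₂ : Integrable (fun u => ‖F (φ u) - F u‖) (volume.restrict (Ioc 0 R)) :=
    .of_bound ((hF.comp_measurable hφm).sub hF).norm.aestronglyMeasurable (2 * C)
      (Eventually.of_forall fun u => by
        rw [norm_norm]
        linarith [norm_sub_le (F (φ u)) (F u), hb (φ u), hb u])
  calc ∫ u in Ioc 0 R, ‖Fk k u - F u‖
      ≤ ∫ u in Ioc 0 R, (‖Fk k u - F (φ u)‖ + ‖F (φ u) - F u‖) :=
        integral_mono_of_nonneg (Eventually.of_forall fun _ => norm_nonneg _)
          (hint₁.add hint₂) (Eventually.of_forall fun u => norm_sub_le_norm_sub_add_norm_sub _ _ _)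
    _ = (∫ u in Ioc 0 R, ‖Fk k u - F (φ u)‖) + ∫ u in Ioc 0 R, ‖F (φ u) - F u‖ :=
        integral_add hint₁ hint₂
    _ ≤ ε * R + η / 2 := by
        gcongr
        · simpa [Real.volume_real_Ioc_of_le hR] using
            (le_abs_self _).trans
              (norm_setIntegral_le_of_norm_le_const (μ := volume) measure_Ioc_lt_top hnear)
        · exact hφ_close φ hφm hφδ
    _ < η := by linarith

end SkorohodTendsto

theorem tendsto_intervalIntegral_norm_sub_of_skorohodTendsto {m : ℕ} {T C : ℝ} (hT : 0 < T)
    {Fk : ℕ → ℝ → EuclideanSpace ℝ (Fin m)} {F : ℝ → EuclideanSpace ℝ (Fin m)}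
    (hFk : ∀ k, StronglyMeasurable (Fk k)) (hF : StronglyMeasurable F)
    (hFkb : ∀ k u, ‖Fk k u‖ ≤ C) (hFb : ∀ u, ‖F u‖ ≤ C) (hc : ∀ᵐ u, ContinuousAt F u)
    (hconv : ∀ R, 0 < R → R < T → SkorohodTendsto R Fk F) :
    Tendsto (fun k => ∫ u in 0..T, ‖Fk k u - F u‖) atTop (𝓝 0) := by
  refine tendsto_intervalIntegral_of_forall_lt (M := 2 * C) hT
    (fun k => ((intervalIntegrable_of_norm_le (hFk k) (hFkb k) 0 T).sub
      (intervalIntegrable_of_norm_le hF hFb 0 T)).norm) (fun _ _ => norm_nonneg _)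
    (fun k u => by linarith [norm_sub_le (Fk k u) (F u), hFkb k u, hFb u]) fun R hR => ?_
  simp only [intervalIntegral.integral_of_le hR.1.le]
  exact (hconv R hR.1 hR.2).tendsto_integral_norm_sub hR.1.le hFk hF hFb (ae_restrict_of_ae hc)

theorem uniform_convergence_of_skorohod_general {l : ℕ} (T C : ℝ) (hT : 0 < T)
    (Xk : ℕ → ℝ → EuclideanSpace ℝ (Fin l)) (Z : ℝ → EuclideanSpace ℝ (Fin l))
    (Vk : ℕ → ℝ → EuclideanSpace ℝ (Fin l)) (V : ℝ → EuclideanSpace ℝ (Fin l))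
    -- `Vk k` and `V` are right-continuous with left limits on `[0,∞)`
    (hVkrc : ∀ k, ∀ t : ℝ, 0 ≤ t → ContinuousWithinAt (Vk k) (Set.Ici t) t)
    (hVkll : ∀ k, ∀ t : ℝ, 0 < t →
      ∃ L, Filter.Tendsto (Vk k) (nhdsWithin t (Set.Iio t)) (nhds L))
    (hVrc : ∀ t : ℝ, 0 ≤ t → ContinuousWithinAt V (Set.Ici t) t)
    (hVll : ∀ t : ℝ, 0 < t → ∃ L, Filter.Tendsto V (nhdsWithin t (Set.Iio t)) (nhds L))
    -- uniform bound on the velocities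
    (hVkb : ∀ k, ∀ u : ℝ, 0 ≤ u → ‖Vk k u‖ ≤ C) (hVb : ∀ u : ℝ, 0 ≤ u → ‖V u‖ ≤ C)
    -- positions are integrals of the velocities
    (hXk : ∀ k, ∀ t : ℝ, 0 ≤ t → Xk k t = Xk k 0 + ∫ u in (0 : ℝ)..t, Vk k u)
    (hZ : ∀ t : ℝ, 0 ≤ t → Z t = Z 0 + ∫ u in (0 : ℝ)..t, V u)
    (h0 : Filter.Tendsto (fun k => Xk k 0) Filter.atTop (nhds (Z 0)))
    (hconv : ∀ R : ℝ, 0 < R → R < T → SkorohodTendsto R Vk V) :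
    TendstoUniformlyOn Xk Z Filter.atTop (Set.Icc 0 T) := by
  -- `V` is only controlled on `[0, ∞)`; its clamped version is RCLL on all of `ℝ`.
  set W := fun u => V (max u 0)
  set Wk := fun k u => Vk k (max u 0)
  have hW_disc := countable_not_continuousAt_comp_max_zero hVrc hVll
  have hW : StronglyMeasurable W := .of_countable_not_continuousAt hW_disc
  have hWk : ∀ k, StronglyMeasurable (Wk k) := fun k =>
    .of_countable_not_continuousAt (countable_not_continuousAt_comp_max_zero (hVkrc k) (hVkll k))
  have hWb : ∀ u, ‖W u‖ ≤ C := fun u => hVb _ (le_max_right u 0)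
  have hWkb : ∀ k u, ‖Wk k u‖ ≤ C := fun k u => hVkb k _ (le_max_right u 0)
  have hclamp : ∀ G : ℝ → EuclideanSpace ℝ (Fin l), EqOn (fun u => G (max u 0)) G (Ici 0) :=
    fun G u hu => by simp [mem_Ici.1 hu]
  have hL1 : Tendsto (fun k => ∫ u in 0..T, ‖Wk k u - W u‖) atTop (𝓝 0) :=
    tendsto_intervalIntegral_norm_sub_of_skorohodTendsto hT hWk hW hWkb hWb
      ((hW_disc.ae_notMem volume).mono fun _ hu => not_not.1 hu) fun R hR hRT =>
        (hconv R hR hRT).congr (fun k => (hclamp _).mono Icc_subset_Ici_self)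
          ((hclamp _).mono Icc_subset_Ici_self)
  have hdist : ∀ k, ∀ t ∈ Icc 0 T,
      dist (Xk k t) (Z t) ≤ dist (Xk k 0) (Z 0) + ∫ u in 0..T, ‖Wk k u - W u‖ := by
    intro k t ht
    have hsub : uIcc 0 t ⊆ Ici 0 := by rw [uIcc_of_le ht.1]; exact Icc_subset_Ici_self
    rw [hXk k t ht.1, hZ t ht.1, intervalIntegral.integral_congr ((hclamp _).symm.mono hsub),
      intervalIntegral.integral_congr ((hclamp V).symm.mono hsub)]
    exact dist_add_intervalIntegral_le ht (intervalIntegrable_of_norm_le (hWk k) (hWkb k) 0 T)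
      (intervalIntegrable_of_norm_le hW hWb 0 T) _ _
  have hbound : Tendsto (fun k => dist (Xk k 0) (Z 0) + ∫ u in 0..T, ‖Wk k u - W u‖)
      atTop (𝓝 0) := by
    simpa using (tendsto_iff_dist_tendsto_zero.1 h0).add hL1
  refine Metric.tendstoUniformlyOn_iff.2 fun ε hε => ?_
  filter_upwards [hbound.eventually (gt_mem_nhds hε)] with k hk t ht
  rw [dist_comm]
  exact (hdist k t ht).trans_lt hk

/-- Skorohod convergence of the (uniformly bounded, RCLL) velocities
on `D[0,R]` for all `R < T`, together with convergence of the initial positions,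
implies uniform convergence of the positions on `[0,T]`. -/
theorem uniform_convergence_of_skorohod {l : ℕ} (T C : ℝ) (hT : 0 < T) (hC : 0 < C)
    (Xk : ℕ → ℝ → EuclideanSpace ℝ (Fin l)) (Z : ℝ → EuclideanSpace ℝ (Fin l))
    (Vk : ℕ → ℝ → EuclideanSpace ℝ (Fin l)) (V : ℝ → EuclideanSpace ℝ (Fin l))
    -- `Vk k` and `V` are right-continuous with left limits on `[0,∞)`
    (hVkrc : ∀ k, ∀ t : ℝ, 0 ≤ t → ContinuousWithinAt (Vk k) (Set.Ici t) t)
    (hVkll : ∀ k, ∀ t : ℝ, 0 < t →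
      ∃ L, Filter.Tendsto (Vk k) (nhdsWithin t (Set.Iio t)) (nhds L))
    (hVrc : ∀ t : ℝ, 0 ≤ t → ContinuousWithinAt V (Set.Ici t) t)
    (hVll : ∀ t : ℝ, 0 < t → ∃ L, Filter.Tendsto V (nhdsWithin t (Set.Iio t)) (nhds L))
    -- uniform bound on the velocities
    (hVkb : ∀ k, ∀ u : ℝ, 0 ≤ u → ‖Vk k u‖ ≤ C) (hVb : ∀ u : ℝ, 0 ≤ u → ‖V u‖ ≤ C)
    -- positions are integrals of the velocities
    (hXk : ∀ k, ∀ t : ℝ, 0 ≤ t → Xk k t = Xk k 0 + ∫ u in (0 : ℝ)..t, Vk k u)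
    (hZ : ∀ t : ℝ, 0 ≤ t → Z t = Z 0 + ∫ u in (0 : ℝ)..t, V u)
    (h0 : Filter.Tendsto (fun k => Xk k 0) Filter.atTop (nhds (Z 0)))
    (hconv : ∀ R : ℝ, 0 < R → R < T → SkorohodTendsto R Vk V) :
    TendstoUniformlyOn Xk Z Filter.atTop (Set.Icc 0 T) :=
  uniform_convergence_of_skorohod_general T C hT Xk Z Vk V hVkrc hVkll hVrc hVll hVkb hVb hXk hZ h0
    hconv
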